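/- arXiv:2112.04166 — 2 statements merged into one kernel-verified Lean document; each statement's English description precedes it below -/
import Mathlib

section
/- For all x, y ∈ [0,1] and every x' ∈ [0,1] with x' ≥ (1 − 1/n)·x, every allocation satisfying WPROP*(x,y) also satisfies WPROP(x',y). -/
open Finset

/-- An allocation: a partition of the item set `Fin m` into `n` (possibly empty) bundles. -/
def IsAllocation {n m : ℕ} (A : Fin n → Finset (Fin m)) : Prop :=
  (∀ i j : Fin n, i ≠ j → Disjoint (A i) (A j)) ∧
    Finset.univ.biUnion A = (Finset.univ : Finset (Fin m))

/-- Additive utility of agent `i` for a bundle `S`. -/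
def util {n m : ℕ} (u : Fin n → Fin m → ℝ) (i : Fin n) (S : Finset (Fin m)) : ℝ :=
  ∑ g ∈ S, u i g

/-- Weighted envy-freeness up to (x, y)-fraction of one item. -/
def WEF {n m : ℕ} (w : Fin n → ℝ) (u : Fin n → Fin m → ℝ) (A : Fin n → Finset (Fin m))
    (x y : ℝ) : Prop :=
  ∀ i j : Fin n, ∃ B : Finset (Fin m), B ⊆ A j ∧ B.card ≤ 1 ∧
    (util u i (A i) + y * util u i B) / w i ≥ (util u i (A j) - x * util u i B) / w j

/-- Weighted proportionality up to (x, y)-fraction of one item. -/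
def WPROP {n m : ℕ} (w : Fin n → ℝ) (u : Fin n → Fin m → ℝ) (A : Fin n → Finset (Fin m))
    (x y : ℝ) : Prop :=
  ∀ i : Fin n, ∃ B : Finset (Fin m), B ⊆ Finset.univ \ A i ∧ B.card ≤ 1 ∧
    (util u i (A i) + y * util u i B) / w i ≥
      (util u i Finset.univ - (n : ℝ) * x * util u i B) / (∑ j, w j)

/-- The stronger notion WPROP*(x,y). -/
def WPROPstar {n m : ℕ} (w : Fin n → ℝ) (u : Fin n → Fin m → ℝ) (A : Fin n → Finset (Fin m))
    (x y : ℝ) : Prop :=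
  ∀ i : Fin n, ∃ B : Finset (Fin m), B ⊆ Finset.univ \ A i ∧ B.card ≤ 1 ∧
    ∃ Bf : Fin n → Finset (Fin m),
      (∀ j : Fin n, j ≠ i → Bf j ⊆ A j ∧ (Bf j).card ≤ 1) ∧
      (util u i (A i) + y * util u i B) / w i ≥
        (util u i Finset.univ - x * ∑ j ∈ Finset.univ.erase i, util u i (Bf j)) / (∑ j, w j)

/-- The (1-out-of-n) maximin share of agent `i`. -/
noncomputable def MMS {n m : ℕ} (u : Fin n → Fin m → ℝ) (i : Fin n) : ℝ :=
  sSup {v : ℝ | ∃ Z : Fin n → Finset (Fin m), IsAllocation Z ∧ v = ⨅ j, util u i (Z j)}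

/-- The normalized maximin share of agent `i`. -/
noncomputable def NMMS {n m : ℕ} (w : Fin n → ℝ) (u : Fin n → Fin m → ℝ) (i : Fin n) : ℝ :=
  (w i / ∑ j, w j) * (n : ℝ) * MMS u i

/-- The weighted maximin share of agent `i`. -/
noncomputable def WMMS {n m : ℕ} (w : Fin n → ℝ) (u : Fin n → Fin m → ℝ) (i : Fin n) : ℝ :=
  w i * sSup {v : ℝ | ∃ Z : Fin n → Finset (Fin m), IsAllocation Z ∧
    v = ⨅ j, util u i (Z j) / w j}

/-! Agent `i` trades the item `B` granted by WPROP* for the item `C` she values most among `B`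
and the items `Bf j` removed from the other bundles. Since the bundles are disjoint, `C` lies
outside `A i`; the `n - 1` removed items are together worth at most `(n - 1) · u_i(C)`, and
`(n - 1) x ≤ n x'`. -/

section Allocation

variable {n m : ℕ} {u : Fin n → Fin m → ℝ} {A : Fin n → Finset (Fin m)} {i j : Fin n}

theorem util_nonneg (hu : ∀ g, 0 ≤ u i g) (S : Finset (Fin m)) : 0 ≤ util u i S :=
  sum_nonneg fun g _ => hu g

theorem IsAllocation.subset_compl_of_subset {S : Finset (Fin m)}
    (hA : IsAllocation A) (hji : j ≠ i) (hS : S ⊆ A j) : S ⊆ univ \ A i := fun _ hg =>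
  mem_sdiff.mpr ⟨mem_univ _, disjoint_left.mp (hA.1 j i hji) (hS hg)⟩

theorem sum_erase_le_card_sub_one_mul {ι : Type*} [Fintype ι] [DecidableEq ι] {f : ι → ℝ}
    {c : ℝ} (i : ι) (hf : ∀ j ≠ i, f j ≤ c) :
    ∑ j ∈ univ.erase i, f j ≤ ((Fintype.card ι : ℝ) - 1) * c := by
  have hcard : ((univ.erase i).card : ℝ) = Fintype.card ι - 1 := by
    rw [← card_univ, ← card_erase_add_one (mem_univ i)]
    push_cast
    ring
  rw [← hcard, ← nsmul_eq_mul]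
  exact sum_le_card_nsmul _ f c fun j hj => hf j (ne_of_mem_erase hj)

theorem exists_best_item_outside (hA : IsAllocation A) {B : Finset (Fin m)}
    (hB : B ⊆ univ \ A i) (hBcard : B.card ≤ 1) {Bf : Fin n → Finset (Fin m)}
    (hBf : ∀ j, j ≠ i → Bf j ⊆ A j ∧ (Bf j).card ≤ 1) :
    ∃ C, C ⊆ univ \ A i ∧ C.card ≤ 1 ∧ util u i B ≤ util u i C ∧
      ∀ j ≠ i, util u i (Bf j) ≤ util u i C := by
  set candidates := insert B ((univ.erase i).image Bf)
  have hcandidates : ∀ D ∈ candidates, D ⊆ univ \ A i ∧ D.card ≤ 1 := by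
    simp only [candidates, mem_insert, mem_image, mem_erase]
    rintro D (rfl | ⟨j, ⟨hj, -⟩, rfl⟩)
    · exact ⟨hB, hBcard⟩
    · exact ⟨hA.subset_compl_of_subset hj (hBf j hj).1, (hBf j hj).2⟩
  obtain ⟨C, hC, hCmax⟩ := exists_max_image candidates (util u i) ⟨B, mem_insert_self _ _⟩
  exact ⟨C, (hcandidates C hC).1, (hcandidates C hC).2, hCmax B (mem_insert_self _ _),
    fun j hj => hCmax (Bf j)
      (mem_insert_of_mem (mem_image_of_mem _ (mem_erase.mpr ⟨hj, mem_univ j⟩)))⟩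

end Allocation

theorem wpropstar_implies_wprop_general (n m : ℕ)
    (w : Fin n → ℝ) (hw : ∀ i, 0 < w i)
    (u : Fin n → Fin m → ℝ) (hu : ∀ i g, 0 ≤ u i g)
    (x y x' : ℝ) (hx : x ∈ Set.Icc (0 : ℝ) 1) (hy : y ∈ Set.Icc (0 : ℝ) 1)
    (hxx' : x' ≥ (1 - 1 / (n : ℝ)) * x)
    (A : Fin n → Finset (Fin m)) (hA : IsAllocation A)
    (hstar : WPROPstar w u A x y) :
    WPROP w u A x' y := by
  intro i
  obtain ⟨B, hB, hBcard, Bf, hBf, hineq⟩ := hstar i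
  obtain ⟨C, hC, hCcard, hBC, hBfC⟩ := exists_best_item_outside hA hB hBcard hBf
  refine ⟨C, hC, hCcard, ?_⟩
  have hsum := sum_erase_le_card_sub_one_mul i hBfC
  rw [Fintype.card_fin] at hsum
  have hC0 := util_nonneg (hu i) C
  have hn : (0 : ℝ) < n := Nat.cast_pos.mpr (Fin.pos i)
  have hxx'n : ((n : ℝ) - 1) * x ≤ n * x' := by
    calc ((n : ℝ) - 1) * x = n * ((1 - 1 / n) * x) := by field_simp
      _ ≤ n * x' := mul_le_mul_of_nonneg_left hxx' hn.le
  have hW : 0 < ∑ j, w j := sum_pos (fun j _ => hw j) ⟨i, mem_univ i⟩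
  calc (util u i univ - n * x' * util u i C) / ∑ j, w j
      ≤ (util u i univ - x * ∑ j ∈ univ.erase i, util u i (Bf j)) / ∑ j, w j := by
        refine div_le_div_of_nonneg_right (sub_le_sub_left ?_ _) hW.le
        linarith [mul_le_mul_of_nonneg_left hsum hx.1, mul_le_mul_of_nonneg_right hxx'n hC0]
    _ ≤ (util u i (A i) + y * util u i B) / w i := hineq
    _ ≤ (util u i (A i) + y * util u i C) / w i := by
        gcongr
        · exact (hw i).le
        · exact hy.1

/-- WPROP*(x,y) implies WPROP(x',y) whenever x' ≥ (1 − 1/n)·x. -/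
theorem wpropstar_implies_wprop (n m : ℕ) (hn : 2 ≤ n)
    (w : Fin n → ℝ) (hw : ∀ i, 0 < w i)
    (u : Fin n → Fin m → ℝ) (hu : ∀ i g, 0 ≤ u i g)
    (x y x' : ℝ) (hx : x ∈ Set.Icc (0 : ℝ) 1) (hy : y ∈ Set.Icc (0 : ℝ) 1)
    (hx' : x' ∈ Set.Icc (0 : ℝ) 1)
    (hxx' : x' ≥ (1 - 1 / (n : ℝ)) * x)
    (A : Fin n → Finset (Fin m)) (hA : IsAllocation A)
    (hstar : WPROPstar w u A x y) :
    WPROP w u A x' y :=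
  wpropstar_implies_wprop_general n m w hw u hu x y x' hx hy hxx' A hA hstar
end

section
/- For each x ∈ [0,1], there exists an instance in which all items are identical such that every allocation maximizing the weighted Nash welfare Π_{i ∈ N} u_i(A_i)^{w_i} over all allocations fails to satisfy WPROP(x, 1−x). -/
open Finset

/-! Two instances cover all `x`. With nine agents, ten identical items and weights
`(200, 1, …, 1)`, a Nash-optimal allocation leaves no bundle empty, so exactly one agent gets two
items, and comparing with the allocation giving them to the heavy agent shows it is the heavy one.
WPROP(x, 1 - x) for that agent needs `2 / 200 ≥ 10 / 208` or `(3 - x) / 200 ≥ (10 - 9x) / 208`,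
i.e. `x ≥ 172 / 199 > 6 / 7`. With two agents, twelve items and weights `(1, 8)`, the light agent
gets one item (`c (12 - c) ^ 8` is maximal at `c = 1`), and WPROP(x, 1 - x) for it needs
`1 ≥ 12 / 9` or `2 - x ≥ (12 - 2x) / 9`, i.e. `x ≤ 6 / 7`. -/

lemma exists_eq_two_of_sum_eq_card_add_one {ι : Type*} [Fintype ι] [DecidableEq ι]
    {c : ι → ℕ} (hc : ∀ i, 1 ≤ c i) (hsum : ∑ i, c i = Fintype.card ι + 1) :
    ∃ k, c k = 2 ∧ ∀ j ≠ k, c j = 1 := by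
  have hexcess : ∑ i, (c i - 1) = 1 := by
    have : ∑ i, (c i - 1) + ∑ _i : ι, 1 = ∑ i, c i := by
      rw [← sum_add_distrib]
      exact sum_congr rfl fun i _ => Nat.sub_add_cancel (hc i)
    simp only [sum_const, card_univ, smul_eq_mul, mul_one] at this
    omega
  obtain ⟨k, -, hk⟩ := exists_ne_zero_of_sum_ne_zero (s := univ) (f := fun i => c i - 1) (by omega)
  have hrest := add_sum_erase univ (fun i => c i - 1) (mem_univ k)
  refine ⟨k, ?_, fun j hj => ?_⟩
  · omega
  · have := (sum_eq_zero_iff.1 (by omega : ∑ i ∈ univ.erase k, (c i - 1) = 0)) j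
      (mem_erase.2 ⟨hj, mem_univ j⟩)
    have := hc j
    omega

section IdenticalItems

variable {n m : ℕ}

lemma util_const_one (i : Fin n) (S : Finset (Fin m)) :
    util (fun _ _ => (1 : ℝ)) i S = S.card := by
  simp [util]

lemma IsAllocation.sum_card {A : Fin n → Finset (Fin m)} (hA : IsAllocation A) :
    ∑ i, (A i).card = m := by
  rw [← card_biUnion fun i _ j _ hij => hA.1 i j hij, hA.2, card_univ, Fintype.card_fin]

lemma exists_isAllocation_card (c : Fin n → ℕ) (hc : ∑ i, c i = m) :
    ∃ A : Fin n → Finset (Fin m), IsAllocation A ∧ ∀ i, (A i).card = c i := by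
  let e : (Σ i, Fin (c i)) ≃ Fin m := finSigmaFinEquiv.trans (finCongr hc)
  refine ⟨fun i => univ.map ((Function.Embedding.sigmaMk i).trans e.toEmbedding), ⟨?_, ?_⟩, ?_⟩
  · intro i j hij
    simp only [Finset.disjoint_left, Finset.mem_map]
    rintro _ ⟨a, -, rfl⟩ ⟨b, -, hb⟩
    exact hij (congrArg Sigma.fst (e.injective hb)).symm
  · refine eq_univ_of_forall fun g => mem_biUnion.2 ⟨(e.symm g).1, mem_univ _, ?_⟩
    exact mem_map.2 ⟨(e.symm g).2, mem_univ _, by simp⟩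
  · intro i
    simp

noncomputable def nashWelfare (w : Fin n → ℝ) (u : Fin n → Fin m → ℝ)
    (A : Fin n → Finset (Fin m)) : ℝ :=
  ∏ i, util u i (A i) ^ w i

def IsMaxNashWelfare (w : Fin n → ℝ) (u : Fin n → Fin m → ℝ) (A : Fin n → Finset (Fin m)) :
    Prop :=
  IsAllocation A ∧ ∀ A', IsAllocation A' → nashWelfare w u A' ≤ nashWelfare w u A

lemma nashWelfare_const_one (w : Fin n → ℝ) (A : Fin n → Finset (Fin m)) :
    nashWelfare w (fun _ _ => 1) A = ∏ i, ((A i).card : ℝ) ^ w i := by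
  simp only [nashWelfare, util_const_one]

lemma one_le_card_of_nashWelfare_pos {w : Fin n → ℝ} (hw : ∀ i, w i ≠ 0)
    {A : Fin n → Finset (Fin m)} (hA : 0 < nashWelfare w (fun _ _ => 1) A) (i : Fin n) :
    1 ≤ (A i).card := by
  by_contra! h
  rw [nashWelfare_const_one, prod_eq_zero (mem_univ i) (by simp [Nat.lt_one_iff.1 h, hw i])] at hA
  exact hA.false

lemma nashWelfare_of_card_eq_two {w : Fin n → ℝ} {A : Fin n → Finset (Fin m)} {k : Fin n}
    (hk : (A k).card = 2) (hj : ∀ j ≠ k, (A j).card = 1) :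
    nashWelfare w (fun _ _ => 1) A = 2 ^ w k := by
  rw [nashWelfare_const_one, prod_eq_single k (fun j _ hjk => by simp [hj j hjk]) (by simp), hk]
  norm_num

end IdenticalItems

lemma IsMaxNashWelfare.card_eq_two {n : ℕ} {w : Fin n → ℝ} (hw : ∀ i, 0 < w i) {i₀ : Fin n}
    (hheavy : ∀ j ≠ i₀, w j < w i₀) {A : Fin n → Finset (Fin (n + 1))}
    (hA : IsMaxNashWelfare w (fun _ _ => 1) A) :
    (A i₀).card = 2 := by
  obtain ⟨R, hR, hRcard⟩ := exists_isAllocation_card (m := n + 1)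
    (fun i => 1 + if i = i₀ then 1 else 0) (by simp [sum_add_distrib])
  have hwelfare : 2 ^ w i₀ ≤ nashWelfare w (fun _ _ => 1) A := by
    rw [← nashWelfare_of_card_eq_two (A := R) (by simp [hRcard]) fun j hj => by simp [hRcard, hj]]
    exact hA.2 R hR
  have hcard : ∀ i, 1 ≤ (A i).card :=
    one_le_card_of_nashWelfare_pos (fun i => (hw i).ne') (hwelfare.trans_lt' (by positivity))
  obtain ⟨k, hk, hj⟩ := exists_eq_two_of_sum_eq_card_add_one hcard (by simpa using hA.1.sum_card)
  rw [nashWelfare_of_card_eq_two hk hj, Real.rpow_le_rpow_left_iff one_lt_two] at hwelfare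
  obtain rfl : k = i₀ := by_contra fun hki => (hheavy k hki).not_ge hwelfare
  exact hk

lemma IsMaxNashWelfare.card_zero_eq_one {A : Fin 2 → Finset (Fin 12)}
    (hA : IsMaxNashWelfare ![1, 8] (fun _ _ => 1) A) :
    (A 0).card = 1 := by
  have hwelfare (B : Fin 2 → Finset (Fin 12)) :
      nashWelfare ![1, 8] (fun _ _ => 1) B = ((B 0).card * (B 1).card ^ 8 : ℕ) := by
    rw [nashWelfare_const_one, Fin.prod_univ_two, Matrix.cons_val_zero, Matrix.cons_val_one,
      Matrix.cons_val_zero, Real.rpow_one, show (8 : ℝ) = (8 : ℕ) by norm_num, Real.rpow_natCast]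
    push_cast
    rfl
  obtain ⟨R, hR, hRcard⟩ := exists_isAllocation_card (m := 12) ![1, 11] rfl
  have hle := hA.2 R hR
  rw [hwelfare, hwelfare, Nat.cast_le, hRcard, hRcard] at hle
  have hsum := hA.1.sum_card
  rw [Fin.sum_univ_two] at hsum
  have hopt : ∀ c ≤ 12, 11 ^ 8 ≤ c * (12 - c) ^ 8 → c = 1 := by decide
  exact hopt _ (by omega) (by simpa [show (A 1).card = 12 - (A 0).card by omega] using hle)

lemma not_wprop_const_one_of_card {n m : ℕ} {w : Fin n → ℝ} {A : Fin n → Finset (Fin m)}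
    {x y : ℝ} (i : Fin n) (h₀ : (A i).card / w i < m / ∑ j, w j)
    (h₁ : ((A i).card + y) / w i < (m - n * x) / ∑ j, w j) :
    ¬ WPROP w (fun _ _ => 1) A x y := by
  intro h
  obtain ⟨B, -, hB, hineq⟩ := h i
  simp only [util_const_one, card_univ, Fintype.card_fin] at hineq
  interval_cases B.card <;>
    simp only [Nat.cast_zero, Nat.cast_one, mul_zero, mul_one, add_zero, sub_zero] at hineq <;>
    linarith

theorem mwnw_not_wprop_general (x : ℝ) :
    ∃ (n m : ℕ) (w : Fin n → ℝ), 2 ≤ n ∧ (∀ i, 0 < w i) ∧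
      ∀ A : Fin n → Finset (Fin m), IsAllocation A →
        (∀ A' : Fin n → Finset (Fin m), IsAllocation A' →
          ∏ i, (util (fun _ _ => (1 : ℝ)) i (A' i)) ^ (w i) ≤
            ∏ i, (util (fun _ _ => (1 : ℝ)) i (A i)) ^ (w i)) →
        ¬ WPROP w (fun _ _ => (1 : ℝ)) A x (1 - x) := by
  rcases le_or_gt x (6 / 7) with hx | hx
  · have hw (i : Fin 9) : 0 < if i = 0 then (200 : ℝ) else 1 := by split_ifs <;> norm_num
    refine ⟨9, 10, fun i => if i = 0 then 200 else 1, by norm_num, hw, fun A hA hmax => ?_⟩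
    have hcard : (A 0).card = 2 :=
      IsMaxNashWelfare.card_eq_two hw (fun j hj => by simp [hj]) ⟨hA, hmax⟩
    have hsum : ∑ j : Fin 9, (if j = 0 then (200 : ℝ) else 1) = 208 := by
      norm_num [Fin.sum_univ_succ]
    refine not_wprop_const_one_of_card 0 ?_ ?_ <;>
      simp only [hcard, hsum] <;> rw [div_lt_div_iff₀ (by norm_num) (by norm_num)] <;>
      push_cast <;> linarith
  · refine ⟨2, 12, ![1, 8], le_rfl, Fin.forall_fin_two.2 ⟨by norm_num, by norm_num⟩,
      fun A hA hmax => ?_⟩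
    have hcard : (A 0).card = 1 := IsMaxNashWelfare.card_zero_eq_one ⟨hA, hmax⟩
    refine not_wprop_const_one_of_card 0 ?_ ?_ <;> simp only [hcard, Fin.sum_univ_two] <;> norm_num
    rw [lt_div_iff₀ (by norm_num)]
    linarith

/-- For each x ∈ [0,1], there is an identical-item instance where every allocation
maximizing the weighted Nash welfare fails WPROP(x,1−x). -/
theorem mwnw_not_wprop (x : ℝ) (hx : x ∈ Set.Icc (0 : ℝ) 1) :
    ∃ (n m : ℕ) (w : Fin n → ℝ), 2 ≤ n ∧ (∀ i, 0 < w i) ∧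
      ∀ A : Fin n → Finset (Fin m), IsAllocation A →
        (∀ A' : Fin n → Finset (Fin m), IsAllocation A' →
          ∏ i, (util (fun _ _ => (1 : ℝ)) i (A' i)) ^ (w i) ≤
            ∏ i, (util (fun _ _ => (1 : ℝ)) i (A i)) ^ (w i)) →
        ¬ WPROP w (fun _ _ => (1 : ℝ)) A x (1 - x) :=
  mwnw_not_wprop_general x
end
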